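/- Let v = (v₁,v₂) ∈ ℝ² be a unit vector with v₁v₂ ≠ 0 and v₁ ≠ v₂. Then the one-dimensional subspace spanned by v is not closed under the unit contraction: there exists c ∈ ℝ such that (cv)# is not a scalar multiple of v, where (cv)# is the componentwise unit contraction. -/

import Mathlib

/-! If `v₁, v₂` have opposite signs, the contraction of `v` itself has exactly one zero
coordinate, which no multiple of `v` has. If they have the same sign, `c = 1/v₁ + 1/v₂` gives
`c vᵢ ≥ 1` for both `i`, so the contraction of `c v` is `(1, 1)`, which is a multiple of `v` only
when `v₁ = v₂`. -/

/-- The componentwise unit contraction on `ℝ²`. -/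
noncomputable def unitContrPair (ξ : ℝ × ℝ) : ℝ × ℝ :=
  (min (max ξ.1 0) 1, min (max ξ.2 0) 1)

section Multiples

variable {R : Type*} [MulZeroClass R] {v w : R × R}

theorem Prod.ne_smul_of_fst_eq_zero [NoZeroDivisors R] (hv : v.1 ≠ 0) (hw₁ : w.1 = 0)
    (hw₂ : w.2 ≠ 0) (d : R) : w ≠ d • v := by
  rintro rfl
  exact mul_ne_zero (left_ne_zero_of_mul hw₂) hv hw₁

theorem Prod.ne_smul_of_snd_eq_zero [NoZeroDivisors R] (hv : v.2 ≠ 0) (hw₁ : w.1 ≠ 0)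
    (hw₂ : w.2 = 0) (d : R) : w ≠ d • v := fun h ↦
  Prod.ne_smul_of_fst_eq_zero (v := v.swap) (w := w.swap) hv hw₂ hw₁ d (by simp [h])

theorem Prod.ne_smul_of_fst_eq_snd [IsLeftCancelMulZero R] (hv : v.1 ≠ v.2) (hw : w.1 = w.2)
    (hw₀ : w.1 ≠ 0) (d : R) : w ≠ d • v := by
  rintro rfl
  exact hv (mul_left_cancel₀ (left_ne_zero_of_mul hw₀) hw)

end Multiples

theorem unitContrPair_fst_eq_zero {ξ : ℝ × ℝ} (h : ξ.1 ≤ 0) : (unitContrPair ξ).1 = 0 := by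
  simp [unitContrPair, h]

theorem unitContrPair_snd_eq_zero {ξ : ℝ × ℝ} (h : ξ.2 ≤ 0) : (unitContrPair ξ).2 = 0 := by
  simp [unitContrPair, h]

theorem unitContrPair_fst_pos {ξ : ℝ × ℝ} (h : 0 < ξ.1) : 0 < (unitContrPair ξ).1 := by
  simp [unitContrPair, h]

theorem unitContrPair_snd_pos {ξ : ℝ × ℝ} (h : 0 < ξ.2) : 0 < (unitContrPair ξ).2 := by
  simp [unitContrPair, h]

theorem unitContrPair_eq_one {ξ : ℝ × ℝ} (h₁ : 1 ≤ ξ.1) (h₂ : 1 ≤ ξ.2) :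
    unitContrPair ξ = (1, 1) := by
  simp [unitContrPair, h₁, h₂, zero_le_one.trans h₁, zero_le_one.trans h₂]

theorem one_le_inv_add_inv_mul_left {a b : ℝ} (h : 0 < a * b) : 1 ≤ (a⁻¹ + b⁻¹) * a := by
  have hab : 0 < a / b := div_pos_iff.2 (mul_pos_iff.1 h)
  rw [add_mul, inv_mul_cancel₀ (left_ne_zero_of_mul h.ne'), inv_mul_eq_div]
  linarith

theorem span_not_closed_under_unit_contraction_general (v : ℝ × ℝ)
    (hne : v.1 * v.2 ≠ 0) (hdiff : v.1 ≠ v.2) :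
    ∃ c : ℝ, ∀ d : ℝ, unitContrPair (c • v) ≠ d • v := by
  rcases hne.lt_or_gt with hneg | hpos
  · refine ⟨1, fun d ↦ ?_⟩
    rw [one_smul]
    rcases mul_neg_iff.1 hneg with ⟨h₁, h₂⟩ | ⟨h₁, h₂⟩
    · exact Prod.ne_smul_of_snd_eq_zero h₂.ne (unitContrPair_fst_pos h₁).ne'
        (unitContrPair_snd_eq_zero h₂.le) d
    · exact Prod.ne_smul_of_fst_eq_zero h₁.ne (unitContrPair_fst_eq_zero h₁.le)
        (unitContrPair_snd_pos h₂).ne' d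
  · refine ⟨v.1⁻¹ + v.2⁻¹, fun d ↦ ?_⟩
    have h₁ : 1 ≤ (v.1⁻¹ + v.2⁻¹) * v.1 := one_le_inv_add_inv_mul_left hpos
    have h₂ : 1 ≤ (v.1⁻¹ + v.2⁻¹) * v.2 := by
      rw [add_comm]
      exact one_le_inv_add_inv_mul_left (mul_comm v.1 v.2 ▸ hpos)
    rw [unitContrPair_eq_one h₁ h₂]
    exact Prod.ne_smul_of_fst_eq_snd hdiff rfl one_ne_zero d

/-- Let `v = (v₁,v₂) ∈ ℝ²` be a unit vector with `v₁v₂ ≠ 0` and `v₁ ≠ v₂`.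
Then the line spanned by `v` is not closed under the unit contraction: there is
`c ∈ ℝ` such that `(c • v)#` is not a scalar multiple of `v`. -/
theorem span_not_closed_under_unit_contraction (v : ℝ × ℝ)
    (hunit : v.1 ^ 2 + v.2 ^ 2 = 1) (hne : v.1 * v.2 ≠ 0) (hdiff : v.1 ≠ v.2) :
    ∃ c : ℝ, ∀ d : ℝ, unitContrPair (c • v) ≠ d • v :=
  span_not_closed_under_unit_contraction_general v hne hdiff
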